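/- arXiv:1305.1651 — 2 statements merged into one kernel-verified Lean document; each statement's English description precedes it below -/
import Mathlib

section
/- Let C_n be a cycle on vertices x_1,...,x_n and 2 ≤ t < n. Every proper induced connected subcollection Γ of the path complex Δ_t(C_n) on a proper subset of the vertices is isomorphic to the path complex Δ_t(L_m) of a line graph on m = |V(Γ)| vertices; i.e., Γ is a run. -/
open Finset

def SC.facesC (Δ : Set (Finset ℕ)) (c : ℤ) : Type :=
  {F : Finset ℕ // F ∈ Δ ∧ (F.card : ℤ) = c}

open Classical in
noncomputable def SC.bdry (K : Type) [Field K] (Δ : Set (Finset ℕ)) (a b : ℤ) :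
    (SC.facesC Δ a →₀ K) →ₗ[K] (SC.facesC Δ b →₀ K) :=
  Finsupp.lsum K fun F => LinearMap.toSpanSingleton K _
    (∑ x ∈ F.1, if h : F.1.erase x ∈ Δ ∧ (((F.1.erase x).card : ℤ) = b)
      then ((-1 : K) ^ (F.1.filter (fun y => y < x)).card) •
        Finsupp.single (⟨F.1.erase x, h⟩ : SC.facesC Δ b) (1 : K)
      else 0)

noncomputable def SC.hdim (K : Type) [Field K] (Δ : Set (Finset ℕ)) (i : ℤ) : ℕ :=
  Module.finrank K (LinearMap.ker (SC.bdry K Δ (i + 1) i)) -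
    Module.finrank K (LinearMap.range (SC.bdry K Δ (i + 2) (i + 1)))

def SC.gen (S : Set (Finset ℕ)) : Set (Finset ℕ) := {F | ∃ A ∈ S, F ⊆ A}

/-- The facet `F_a = {x_a, …, x_{a+t-1}}` (indices mod `n`, vertices `0, …, n-1`). -/
def cycForm (n t a : ℕ) : Finset ℕ := (Finset.range t).image (fun k => (a + k) % n)

/-- The facets of the path complex `Δ_t(C_n)` of the cycle. -/
def cycFacets (n t : ℕ) : Finset (Finset ℕ) := (Finset.range n).image (cycForm n t)

/-- The Stanley–Reisner complex on vertex set `{0,…,n-1}` of the squarefree monomial ideal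
whose minimal generators have supports `Gens`. -/
def SRcomplex (n : ℕ) (Gens : Finset (Finset ℕ)) : Set (Finset ℕ) :=
  {F | F ⊆ Finset.range n ∧ ¬ ∃ G ∈ Gens, G ⊆ F}

open Classical in
/-- The graded Betti number `β_{i,j}(R/I)` of the squarefree monomial ideal
`I ⊆ K[x_0,…,x_{n-1}]` with generator supports `Gens`, characterized by
Hochster's formula: `β_{i,j}(R/I) = Σ_{W, |W| = j} dim_K H̃_{j-i-1}((Δ_I)|_W; K)`. -/
noncomputable def betti (K : Type) [Field K] (n : ℕ) (Gens : Finset (Finset ℕ)) (i j : ℕ) : ℕ :=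
  ∑ W ∈ (Finset.range n).powersetCard j,
    SC.hdim K {F | F ∈ SRcomplex n Gens ∧ F ⊆ W} ((j : ℤ) - i - 1)

/-- Betti numbers of `R/I_t(C_n)`. -/
noncomputable def bettiCycle (K : Type) [Field K] (n t i j : ℕ) : ℕ :=
  betti K n (cycFacets n t) i j

/-- The facets of a run of length `s` (for path length `t`) starting at vertex `a`:
`F_i = {a+i, …, a+i+t-1}` for `0 ≤ i < s`. -/
def runFacets (t a s : ℕ) : Set (Finset ℕ) := {F | ∃ i < s, F = Finset.Ico (a + i) (a + i + t)}

/-- Facets of a disjoint union of runs of lengths `L`, laid out left to right starting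
at vertex `a`, with a gap between consecutive runs. -/
def runsFacets (t : ℕ) : ℕ → List ℕ → Set (Finset ℕ)
  | _, [] => ∅
  | a, s :: L => runFacets t a s ∪ runsFacets t (a + s + t) L

/-- Vertex set of the above disjoint union of runs (a run of length `s` has `s+t-1` vertices). -/
def runsVerts (t : ℕ) : ℕ → List ℕ → Finset ℕ
  | _, [] => ∅
  | a, s :: L => Finset.Ico a (a + s + t - 1) ∪ runsVerts t (a + s + t) L

/-- `E(s_1,…,s_r)`: the complex generated by the complements, within the total vertex set,
of the facets of a disjoint union of runs of lengths `s_1, …, s_r`. -/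
def EC (t : ℕ) (L : List ℕ) : Set (Finset ℕ) :=
  SC.gen {G | ∃ F ∈ runsFacets t 0 L, G = runsVerts t 0 L \ F}


/-! ### Auxiliary lemmas for the rotation trick -/

/-- Rotation sending `v` to `n-1`. -/
def rotf (n v : ℕ) (x : ℕ) : ℕ := (x + (n - 1 - v)) % n

lemma rotf_lt {n : ℕ} (hn : 0 < n) (v x : ℕ) : rotf n v x < n := Nat.mod_lt _ hn

lemma rotf_v {n v : ℕ} (hv : v < n) : rotf n v v = n - 1 := by
  unfold rotf
  rw [show v + (n - 1 - v) = n - 1 by omega]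
  exact Nat.mod_eq_of_lt (by omega)

lemma rotf_inj {n v x y : ℕ} (hx : x < n) (hy : y < n)
    (h : rotf n v x = rotf n v y) : x = y := by
  have h2 : x % n = y % n := Nat.ModEq.add_right_cancel' (n - 1 - v) h
  rwa [Nat.mod_eq_of_lt hx, Nat.mod_eq_of_lt hy] at h2

lemma rotf_surj {n v : ℕ} (hv : v < n) {y : ℕ} (hy : y < n) :
    ∃ x, x < n ∧ rotf n v x = y := by
  refine ⟨(y + v + 1) % n, Nat.mod_lt _ (by omega), ?_⟩
  unfold rotf
  rw [Nat.mod_add_mod, show y + v + 1 + (n - 1 - v) = y + n by omega,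
    Nat.add_mod_right, Nat.mod_eq_of_lt hy]

lemma cycForm_eq_Ico {n t b : ℕ} (h : b + t ≤ n) : cycForm n t b = Finset.Ico b (b + t) := by
  ext x
  simp only [cycForm, Finset.mem_image, Finset.mem_range, Finset.mem_Ico]
  constructor
  · rintro ⟨k, hk, rfl⟩
    rw [Nat.mod_eq_of_lt (by omega)]
    omega
  · rintro ⟨h1, h2⟩
    exact ⟨x - b, by omega, by rw [show b + (x - b) = x by omega, Nat.mod_eq_of_lt (by omega)]⟩

lemma cycForm_subset_range {n t a : ℕ} (hn : 0 < n) : cycForm n t a ⊆ Finset.range n := by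
  intro x hx
  simp only [cycForm, Finset.mem_image, Finset.mem_range] at hx ⊢
  obtain ⟨k, _, rfl⟩ := hx
  exact Nat.mod_lt _ hn

lemma mem_cycForm_last {n t b : ℕ} (hb : b < n) (ht : 1 ≤ t) (h : n ≤ b + t) :
    n - 1 ∈ cycForm n t b := by
  simp only [cycForm, Finset.mem_image, Finset.mem_range]
  exact ⟨n - 1 - b, by omega,
    by rw [show b + (n - 1 - b) = n - 1 by omega, Nat.mod_eq_of_lt (by omega)]⟩

lemma cycForm_image {n t v a : ℕ} :
    (cycForm n t a).image (rotf n v) = cycForm n t (rotf n v a) := by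
  unfold rotf cycForm
  rw [Finset.image_image]
  congr 1
  funext k
  simp only [Function.comp_apply]
  rw [Nat.mod_add_mod, Nat.mod_add_mod, show a + k + (n - 1 - v) = a + (n - 1 - v) + k by ring]

lemma Ico_image_sub {b c t : ℕ} (h : c ≤ b) :
    (Finset.Ico b (b + t)).image (fun z => z - c) = Finset.Ico (b - c) (b - c + t) := by
  ext x
  simp only [Finset.mem_image, Finset.mem_Ico]
  constructor
  · rintro ⟨z, hz, rfl⟩
    omega
  · intro hx
    exact ⟨x + c, by omega, by omega⟩

/-- Proposition 3.3. Every proper induced connected subcollection `Γ` of the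
path complex `Δ_t(C_n)` (induced on a proper subset `Y` of the vertices, with `Y = V(Γ)`)
is isomorphic, via a face-preserving bijection of vertex sets, to the path complex
`Δ_t(L_m)` of the line graph on `m = |V(Γ)|` vertices; i.e. `Γ` is a run. -/
theorem induced_connected_subcollection_is_run (n t : ℕ) (ht : 2 ≤ t) (htn : t < n)
    (Y : Finset ℕ) (hY : Y ⊂ Finset.range n)
    (Λ : Finset (Finset ℕ)) (hΛ : Λ = (cycFacets n t).filter (· ⊆ Y))
    (hver : Y = Λ.sup id) (hne : Λ.Nonempty)
    (hconn : ¬ ∃ A B : Finset (Finset ℕ), A ∪ B = Λ ∧ A.Nonempty ∧ B.Nonempty ∧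
      Disjoint (A.sup id) (B.sup id)) :
    ∃ f : ℕ → ℕ, Set.BijOn f ↑Y ↑(Finset.range Y.card) ∧
      Λ.image (Finset.image f) =
        (Finset.range (Y.card + 1 - t)).image (fun a => Finset.Ico a (a + t)) := by
  classical
  obtain ⟨v, hvn, hvY⟩ := Finset.exists_of_ssubset hY
  rw [Finset.mem_range] at hvn
  have hn : 0 < n := by omega
  have hYsub : Y ⊆ Finset.range n := hY.subset
  -- membership characterization for Λ
  have hmemΛ : ∀ F, F ∈ Λ ↔ (∃ a, a < n ∧ cycForm n t a = F) ∧ F ⊆ Y := by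
    intro F
    rw [hΛ, Finset.mem_filter]
    simp only [cycFacets, Finset.mem_image, Finset.mem_range]
  -- every facet becomes a genuine interval after rotation
  have hchar : ∀ F ∈ Λ, ∃ b, b + t + 1 ≤ n ∧ F.image (rotf n v) = Finset.Ico b (b + t) ∧
      Finset.Ico b (b + t) ⊆ Y.image (rotf n v) := by
    intro F hF
    obtain ⟨⟨a, han, haF⟩, hFY⟩ := (hmemΛ F).mp hF
    have himg : F.image (rotf n v) = cycForm n t (rotf n v a) := by
      rw [← haF, cycForm_image]
    have hbn : rotf n v a < n := rotf_lt hn v a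
    have hnb : rotf n v a + t + 1 ≤ n := by
      by_contra hcon
      have hmem : n - 1 ∈ F.image (rotf n v) := by
        rw [himg]; exact mem_cycForm_last hbn (by omega) (by omega)
      obtain ⟨x, hxF, hx⟩ := Finset.mem_image.mp hmem
      have hxn : x < n := Finset.mem_range.mp (hYsub (hFY hxF))
      have hxv : x = v := rotf_inj hxn hvn (by rw [hx, rotf_v hvn])
      exact hvY (hxv ▸ hFY hxF)
    refine ⟨rotf n v a, hnb, ?_, ?_⟩
    · rw [himg, cycForm_eq_Ico (by omega)]
    · rw [← cycForm_eq_Ico (show rotf n v a + t ≤ n by omega), ← himg]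
      exact Finset.image_subset_image hFY
  -- conversely, every interval inside the image of Y comes from a facet of Λ
  have hconv : ∀ b, b + t + 1 ≤ n → Finset.Ico b (b + t) ⊆ Y.image (rotf n v) →
      ∃ F ∈ Λ, F.image (rotf n v) = Finset.Ico b (b + t) := by
    intro b hb hsub
    obtain ⟨a, han, hab⟩ := rotf_surj hvn (show b < n by omega)
    have himg : (cycForm n t a).image (rotf n v) = Finset.Ico b (b + t) := by
      rw [cycForm_image, hab, cycForm_eq_Ico (by omega)]
    refine ⟨cycForm n t a, (hmemΛ _).mpr ⟨⟨a, han, rfl⟩, ?_⟩, himg⟩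
    intro x hx
    have hxn : x < n := Finset.mem_range.mp (cycForm_subset_range hn hx)
    have : rotf n v x ∈ Y.image (rotf n v) := hsub (himg ▸ Finset.mem_image_of_mem _ hx)
    obtain ⟨y, hyY, hy⟩ := Finset.mem_image.mp this
    have : y = x := rotf_inj (Finset.mem_range.mp (hYsub hyY)) hxn hy
    exact this ▸ hyY
  -- every vertex of Y lies in some facet
  have hmemY : ∀ x ∈ Y, ∃ F ∈ Λ, x ∈ F := by
    intro x hx
    rw [hver] at hx
    exact Finset.mem_sup.mp hx
  -- nonemptiness
  have hYne : Y.Nonempty := by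
    obtain ⟨F0, hF0⟩ := hne
    obtain ⟨b, _, hFI, _⟩ := hchar F0 hF0
    have hFne : F0.Nonempty := by
      rw [← Finset.image_nonempty (f := rotf n v), hFI]
      exact ⟨b, Finset.mem_Ico.mpr ⟨le_refl _, by omega⟩⟩
    exact hFne.mono ((hmemΛ F0).mp hF0).2
  have hne' : (Y.image (rotf n v)).Nonempty := hYne.image _
  set c := (Y.image (rotf n v)).min' hne' with hc
  set d := (Y.image (rotf n v)).max' hne' with hd'
  have hcmem : c ∈ Y.image (rotf n v) := Finset.min'_mem _ _
  have hdmem : d ∈ Y.image (rotf n v) := Finset.max'_mem _ _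
  have hcd : c ≤ d := Finset.min'_le _ _ hdmem
  -- d ≤ n - 2
  have hdn : d ≤ n - 2 := by
    obtain ⟨y, hyY, hy⟩ := Finset.mem_image.mp hdmem
    have hyn : y < n := Finset.mem_range.mp (hYsub hyY)
    have hlt : rotf n v y < n := rotf_lt hn v y
    have hne1 : rotf n v y ≠ n - 1 := by
      intro h
      exact hvY ((rotf_inj hyn hvn (by rw [h, rotf_v hvn])) ▸ hyY)
    omega
  -- the image of Y is an interval
  have hinterval : Y.image (rotf n v) = Finset.Icc c d := by
    apply Finset.Subset.antisymm
    · intro x hx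
      exact Finset.mem_Icc.mpr ⟨Finset.min'_le _ _ hx, Finset.le_max' _ _ hx⟩
    · by_contra hcon
      obtain ⟨w, hw, hwY⟩ := Finset.not_subset.mp hcon
      rw [Finset.mem_Icc] at hw
      have hsplit : ∀ F ∈ Λ, (∀ x ∈ F, rotf n v x < w) ∨ (∀ x ∈ F, w < rotf n v x) := by
        intro F hF
        obtain ⟨b, hbn, hFI, hsub⟩ := hchar F hF
        have hwb : ¬ (b ≤ w ∧ w < b + t) := by
          rw [← Finset.mem_Ico]
          exact fun h => hwY (hsub h)
        by_cases hbw : b ≤ w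
        · left
          intro x hx
          have hmem : rotf n v x ∈ Finset.Ico b (b + t) :=
            hFI ▸ Finset.mem_image_of_mem _ hx
          rw [Finset.mem_Ico] at hmem
          omega
        · right
          intro x hx
          have hmem : rotf n v x ∈ Finset.Ico b (b + t) :=
            hFI ▸ Finset.mem_image_of_mem _ hx
          rw [Finset.mem_Ico] at hmem
          omega
      set A := Λ.filter (fun F => ∀ x ∈ F, rotf n v x < w) with hA
      set B := Λ.filter (fun F => ∀ x ∈ F, w < rotf n v x) with hB
      have hABU : A ∪ B = Λ := by
        apply Finset.Subset.antisymm
        · exact Finset.union_subset (Finset.filter_subset _ _) (Finset.filter_subset _ _)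
        · intro F hF
          rcases hsplit F hF with h | h
          · exact Finset.mem_union_left _ (Finset.mem_filter.mpr ⟨hF, h⟩)
          · exact Finset.mem_union_right _ (Finset.mem_filter.mpr ⟨hF, h⟩)
      have hAne : A.Nonempty := by
        obtain ⟨y, hyY, hyc⟩ := Finset.mem_image.mp hcmem
        obtain ⟨F, hF, hyF⟩ := hmemY y hyY
        rcases hsplit F hF with h | h
        · exact ⟨F, Finset.mem_filter.mpr ⟨hF, h⟩⟩
        · exfalso
          have h1 := h y hyF
          have hcw : c < w := lt_of_le_of_ne hw.1 (fun hh => hwY (hh ▸ hcmem))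
          omega
      have hBne : B.Nonempty := by
        obtain ⟨y, hyY, hyc⟩ := Finset.mem_image.mp hdmem
        obtain ⟨F, hF, hyF⟩ := hmemY y hyY
        rcases hsplit F hF with h | h
        · exfalso
          have h1 := h y hyF
          have hdw : w < d := lt_of_le_of_ne hw.2 (fun hh => hwY (hh ▸ hdmem))
          omega
        · exact ⟨F, Finset.mem_filter.mpr ⟨hF, h⟩⟩
      have hdisj : Disjoint (A.sup id) (B.sup id) := by
        rw [Finset.disjoint_left]
        intro x hxA hxB
        obtain ⟨F, hF, hxF⟩ := Finset.mem_sup.mp hxA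
        obtain ⟨G, hG, hxG⟩ := Finset.mem_sup.mp hxB
        have h1 := (Finset.mem_filter.mp hF).2 x hxF
        have h2 := (Finset.mem_filter.mp hG).2 x hxG
        omega
      exact hconn ⟨A, B, hABU, hAne, hBne, hdisj⟩
  -- cardinality of Y
  have hinjY : Set.InjOn (rotf n v) ↑Y := by
    intro x hx y hy h
    exact rotf_inj (Finset.mem_range.mp (hYsub hx)) (Finset.mem_range.mp (hYsub hy)) h
  have hm : Y.card = d + 1 - c := by
    rw [← Finset.card_image_of_injOn hinjY, hinterval, Nat.card_Icc]
  -- t ≤ d + 1 - c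
  have htm : t ≤ d + 1 - c := by
    obtain ⟨F0, hF0⟩ := hne
    obtain ⟨b, hbn, hFI, hsub⟩ := hchar F0 hF0
    rw [hinterval] at hsub
    have h1 := Finset.mem_Icc.mp (hsub (Finset.mem_Ico.mpr ⟨le_refl b, by omega⟩))
    have h2 := Finset.mem_Icc.mp
      (hsub (Finset.mem_Ico.mpr (show b ≤ b + t - 1 ∧ b + t - 1 < b + t by omega)))
    omega
  clear_value c d
  clear hc hd'
  refine ⟨fun x => rotf n v x - c, ⟨?_, ?_, ?_⟩, ?_⟩
  · -- MapsTo
    intro x hx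
    simp only [Finset.coe_range, Set.mem_Iio]
    show rotf n v x - c < Y.card
    have hmem : rotf n v x ∈ Finset.Icc c d := by
      rw [← hinterval]
      exact Finset.mem_image_of_mem _ (Finset.mem_coe.mp hx)
    rw [Finset.mem_Icc] at hmem
    omega
  · -- InjOn
    intro x hx y hy hxy
    have hx' : rotf n v x ∈ Finset.Icc c d := by
      rw [← hinterval]; exact Finset.mem_image_of_mem _ (Finset.mem_coe.mp hx)
    have hy' : rotf n v y ∈ Finset.Icc c d := by
      rw [← hinterval]; exact Finset.mem_image_of_mem _ (Finset.mem_coe.mp hy)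
    rw [Finset.mem_Icc] at hx' hy'
    have hxy' : rotf n v x - c = rotf n v y - c := hxy
    have : rotf n v x = rotf n v y := by omega
    exact hinjY hx hy this
  · -- SurjOn
    intro z hz
    simp only [Finset.coe_range, Set.mem_Iio] at hz
    have hmem : z + c ∈ Y.image (rotf n v) := by
      rw [hinterval]
      exact Finset.mem_Icc.mpr ⟨by omega, by omega⟩
    obtain ⟨y, hyY, hy⟩ := Finset.mem_image.mp hmem
    refine ⟨y, Finset.mem_coe.mpr hyY, ?_⟩
    show rotf n v y - c = z
    omega
  · -- the image equality
    ext G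
    simp only [Finset.mem_image, Finset.mem_range]
    constructor
    · rintro ⟨F, hF, rfl⟩
      obtain ⟨b, hbn, hFI, hsub⟩ := hchar F hF
      rw [hinterval] at hsub
      have h1 := Finset.mem_Icc.mp (hsub (Finset.mem_Ico.mpr ⟨le_refl b, by omega⟩))
      have h2 := Finset.mem_Icc.mp
        (hsub (Finset.mem_Ico.mpr (show b ≤ b + t - 1 ∧ b + t - 1 < b + t by omega)))
      refine ⟨b - c, by omega, ?_⟩
      have himg : F.image (fun x => rotf n v x - c)
          = (F.image (rotf n v)).image (fun z => z - c) := by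
        rw [Finset.image_image]; rfl
      rw [himg, hFI, Ico_image_sub (by omega)]
    · rintro ⟨a, ha, rfl⟩
      have hb1 : (a + c) + t + 1 ≤ n := by omega
      have hb2 : Finset.Ico (a + c) (a + c + t) ⊆ Y.image (rotf n v) := by
        rw [hinterval]
        intro x hx
        rw [Finset.mem_Ico] at hx
        exact Finset.mem_Icc.mpr ⟨by omega, by omega⟩
      obtain ⟨F, hF, hFI⟩ := hconv (a + c) hb1 hb2
      refine ⟨F, hF, ?_⟩
      have himg : F.image (fun x => rotf n v x - c)
          = (F.image (rotf n v)).image (fun z => z - c) := by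
        rw [Finset.image_image]; rfl
      rw [himg, hFI, Ico_image_sub (by omega), Nat.add_sub_cancel]
end

section
/- Fix t ≥ 2 and r ≥ 2, and let E = E(s_1,...,s_r) as above. If s_j = 2 then H̃_i(E) ≅ H̃_{i-2}(E(s_1,...,s_{j-1},s_{j+1},...,s_r)) for all i, and if s_j = 1 then H̃_i(E) ≅ H̃_{i-1}(E(s_1,...,s_{j-1},s_{j+1},...,s_r)) for all i. -/
open Finset

/-!
Write `V` for the vertices of the runs other than the `j`-th and `R` for the `s + t - 1`
vertices of the `j`-th run. The generators of `E` are `R ∪ (V \ F)` for the facets `F` of the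
other runs, and `V ∪ (R \ F)` for the `s` facets of the `j`-th run: `V` itself when `s = 1`, and
`V ∪ {a + t}`, `V ∪ {a}` when `s = 2`, where `a` is the first vertex of `R`. Each of the two
families has a common vertex, so both generate cones and Mayer–Vietoris gives
`H̃ᵢ(E) ≅ H̃ᵢ₋₁` of their intersection. For `s = 1` the intersection is generated by the
`V \ F`, which is `E(s₁, …, ŝⱼ, …, s_r)` up to an order-preserving relabelling of the
vertices. For `s = 2` it is the union of the cones with apexes `a + t` and `a` over that
complex, and a second Mayer–Vietoris step gives the other shift.
-/

section LinearAlgebra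

open Module LinearMap

variable {K : Type} [Field K]

lemma finrank_eq_finrank_map_add_of_inf_ker {M N : Type} [AddCommGroup M] [Module K M]
    [AddCommGroup N] [Module K N] [FiniteDimensional K M] (f : M →ₗ[K] N)
    {S T : Submodule K M} (hT : S ⊓ ker f = T) :
    finrank K S = finrank K (S.map f) + finrank K T := by
  have hker : ker (f.domRestrict S) = (ker f).comap S.subtype := ker_domRestrict S f
  rw [← (Submodule.comapSubtypeEquivOfLe (hT ▸ inf_le_left : T ≤ S)).finrank_eq, ← hT,
    Submodule.comap_inf, Submodule.comap_subtype_self, top_inf_eq, ← hker, ← range_domRestrict,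
    finrank_range_add_finrank_ker]

section Conjugation

variable {M M' N N' : Type} [AddCommGroup M] [Module K M]
  [AddCommGroup M'] [Module K M'] [AddCommGroup N] [Module K N] [AddCommGroup N'] [Module K N']
  (e₁ : M ≃ₗ[K] M') (e₂ : N ≃ₗ[K] N') {f : M →ₗ[K] N} {g : M' →ₗ[K] N'}

lemma finrank_ker_eq_of_conj (h : ∀ x, g (e₁ x) = e₂ (f x)) :
    finrank K (ker g) = finrank K (ker f) := by
  have hker : ker g = (ker f).map (e₁ : M →ₗ[K] M') := by
    ext y
    rw [Submodule.mem_map_equiv, mem_ker, mem_ker, ← e₁.apply_symm_apply y, h,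
      e₂.map_eq_zero_iff, e₁.symm_apply_apply]
  rw [hker, e₁.finrank_map_eq]

lemma finrank_range_eq_of_conj (h : ∀ x, g (e₁ x) = e₂ (f x)) :
    finrank K (range g) = finrank K (range f) := by
  have hrange : range g = (range f).map (e₂ : N →ₗ[K] N') := by
    ext y
    rw [Submodule.mem_map_equiv]
    constructor
    · rintro ⟨x, rfl⟩
      rw [← e₁.apply_symm_apply x, h, e₂.symm_apply_apply]
      exact mem_range_self f _
    · rintro ⟨x, hx⟩
      exact ⟨e₁ x, by rw [h, hx, e₂.apply_symm_apply]⟩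
  rw [hrange, e₂.finrank_map_eq]

end Conjugation

variable {A2 A1 A0 B3 B2 B1 B0 C3 C2 C1 : Type}
  [AddCommGroup A2] [AddCommGroup A1] [AddCommGroup A0]
  [AddCommGroup B3] [AddCommGroup B2] [AddCommGroup B1] [AddCommGroup B0]
  [AddCommGroup C3] [AddCommGroup C2] [AddCommGroup C1]
  [Module K A2] [Module K A1] [Module K A0]
  [Module K B3] [Module K B2] [Module K B1] [Module K B0]
  [Module K C3] [Module K C2] [Module K C1]

variable [FiniteDimensional K B2]
  {dA2 : A2 →ₗ[K] A1} {dA1 : A1 →ₗ[K] A0}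
  {dB3 : B3 →ₗ[K] B2} {dB2 : B2 →ₗ[K] B1} {dB1 : B1 →ₗ[K] B0}
  {dC3 : C3 →ₗ[K] C2} {dC2 : C2 →ₗ[K] C1}
  {f2 : A2 →ₗ[K] B2} {f1 : A1 →ₗ[K] B1} {f0 : A0 →ₗ[K] B0}
  {g3 : B3 →ₗ[K] C3} {g2 : B2 →ₗ[K] C2} {g1 : B1 →ₗ[K] C1}

lemma finrank_comap_ker_eq_finrank_ker_add (hf2 : Function.Injective f2)
    (hg2 : Function.Surjective g2) (hfg2 : ker g2 = range f2) (hfg1 : ker g1 = range f1)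
    (hf2d : ∀ x, dB2 (f2 x) = f1 (dA2 x)) (hg2d : ∀ x, dC2 (g2 x) = g1 (dB2 x)) :
    finrank K ((ker g1).comap dB2) = finrank K (ker dC2) + finrank K A2 := by
  have hmap : ((ker g1).comap dB2).map g2 = ker dC2 := by
    apply le_antisymm
    · rintro _ ⟨b, hb, rfl⟩
      rw [mem_ker, hg2d]; exact hb
    · intro c hc
      obtain ⟨b, rfl⟩ := hg2 c
      exact ⟨b, show dB2 b ∈ ker g1 by rw [mem_ker, ← hg2d]; exact hc, rfl⟩
  have hker : (ker g1).comap dB2 ⊓ ker g2 = range f2 := by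
    rw [hfg2, inf_eq_right]
    rintro _ ⟨a, rfl⟩
    rw [Submodule.mem_comap, hf2d, hfg1]; exact mem_range_self f1 _
  rw [finrank_eq_finrank_map_add_of_inf_ker g2 hker, hmap, finrank_range_of_inj hf2]

lemma finrank_comap_ker_eq_finrank_ker_add_finrank_range (hf1 : Function.Injective f1)
    (hf0 : Function.Injective f0) (hfg1 : ker g1 = range f1)
    (hf1d : ∀ x, dB1 (f1 x) = f0 (dA1 x))
    (hB2 : ker dB2 = range dB3) (hB1 : ker dB1 = range dB2) :
    finrank K ((ker g1).comap dB2) = finrank K (ker dA1) + finrank K (range dB3) := by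
  have hmap : ((ker g1).comap dB2).map dB2 = (ker dA1).map f1 := by
    apply le_antisymm
    · rintro _ ⟨b, hb, rfl⟩
      obtain ⟨a, ha⟩ : dB2 b ∈ range f1 := hfg1 ▸ hb
      refine ⟨a, hf0 ?_, ha⟩
      rw [← hf1d, ha, map_zero, ← mem_ker, hB1]; exact mem_range_self dB2 b
    · rintro _ ⟨a, ha, rfl⟩
      obtain ⟨b, hb⟩ : f1 a ∈ range dB2 := by
        rw [← hB1, mem_ker, hf1d, mem_ker.mp ha, map_zero]
      exact ⟨b, show dB2 b ∈ ker g1 by rw [hb, hfg1]; exact mem_range_self f1 a, hb⟩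
  have hker : (ker g1).comap dB2 ⊓ ker dB2 = range dB3 := by
    rw [← hB2, inf_eq_right]
    intro b hb
    rw [Submodule.mem_comap, mem_ker.mp hb]; exact zero_mem _
  rw [finrank_eq_finrank_map_add_of_inf_ker dB2 hker, hmap,
    (Submodule.equivMapOfInjective f1 hf1 _).finrank_eq]

lemma finrank_range_eq_finrank_range_add_finrank_ker (hf2 : Function.Injective f2)
    (hf1 : Function.Injective f1) (hg3 : Function.Surjective g3) (hfg2 : ker g2 = range f2)
    (hf2d : ∀ x, dB2 (f2 x) = f1 (dA2 x)) (hg3d : ∀ x, dC3 (g3 x) = g2 (dB3 x))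
    (hB2 : ker dB2 = range dB3) :
    finrank K (range dB3) = finrank K (range dC3) + finrank K (ker dA2) := by
  have hmap : (range dB3).map g2 = range dC3 := by
    rw [← range_comp, ← range_comp_of_range_eq_top dC3 (range_eq_top.mpr hg3)]
    exact congrArg LinearMap.range (LinearMap.ext fun x => (hg3d x).symm)
  have hker : range dB3 ⊓ ker g2 = (ker dA2).map f2 := by
    apply le_antisymm
    · rintro b ⟨hb3, hb⟩
      obtain ⟨a, rfl⟩ : b ∈ range f2 := hfg2 ▸ hb
      refine ⟨a, hf1 ?_, rfl⟩
      rw [← hf2d, map_zero, ← mem_ker, hB2]; exact hb3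
    · rintro _ ⟨a, ha, rfl⟩
      refine Submodule.mem_inf.mpr ⟨?_, hfg2 ▸ mem_range_self f2 a⟩
      rw [← hB2, mem_ker, hf2d, mem_ker.mp ha, map_zero]
  rw [finrank_eq_finrank_map_add_of_inf_ker g2 hker, hmap,
    (Submodule.equivMapOfInjective f2 hf2 _).finrank_eq]

/-- For a short exact sequence of complexes `0 → A → B → C → 0` with `B` exact in degrees
`1` and `2`, the connecting map identifies `H₂(C)` with `H₁(A)`. The dimension of the chains of
`B₂` whose boundary lies in `A₁` is computed in two ways. -/
lemma finrank_ker_add_finrank_range_of_shortExact [FiniteDimensional K A2]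
    (hf2 : Function.Injective f2) (hf1 : Function.Injective f1) (hf0 : Function.Injective f0)
    (hg3 : Function.Surjective g3) (hg2 : Function.Surjective g2)
    (hfg2 : ker g2 = range f2) (hfg1 : ker g1 = range f1)
    (hf2d : ∀ x, dB2 (f2 x) = f1 (dA2 x)) (hf1d : ∀ x, dB1 (f1 x) = f0 (dA1 x))
    (hg3d : ∀ x, dC3 (g3 x) = g2 (dB3 x)) (hg2d : ∀ x, dC2 (g2 x) = g1 (dB2 x))
    (hB2 : ker dB2 = range dB3) (hB1 : ker dB1 = range dB2) :
    finrank K (ker dC2) + finrank K (range dA2) = finrank K (ker dA1) + finrank K (range dC3) := by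
  have h1 := finrank_comap_ker_eq_finrank_ker_add hf2 hg2 hfg2 hfg1 hf2d hg2d
  have h2 := finrank_comap_ker_eq_finrank_ker_add_finrank_range hf1 hf0 hfg1 hf1d hB2 hB1
  have h3 := finrank_range_eq_finrank_range_add_finrank_ker hf2 hf1 hg3 hfg2 hf2d hg3d hB2
  have h4 := dA2.finrank_range_add_finrank_ker
  omega

end LinearAlgebra

namespace Finset

variable {α : Type*} [DecidableEq α]

lemma inter_union_eq_of_disjoint {V R G : Finset α} (hVR : Disjoint V R) (hG : G ⊆ V) :
    V ∩ (R ∪ G) = G := by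
  rw [inter_union_distrib_left, disjoint_iff_inter_eq_empty.mp hVR, empty_union,
    inter_eq_right.mpr hG]

lemma union_singleton_inter_union_eq {V R G : Finset α} {p : α} (hp : p ∈ R)
    (hVR : Disjoint V R) (hG : G ⊆ V) : (V ∪ {p}) ∩ (R ∪ G) = G ∪ {p} := by
  rw [union_inter_distrib_right, inter_union_eq_of_disjoint hVR hG,
    inter_eq_left.mpr (singleton_subset_iff.mpr (mem_union_left G hp))]

lemma union_singleton_inter_union_singleton {G G' : Finset α} {p q : α} (hpq : p ≠ q)
    (hp : p ∉ G') (hq : q ∉ G) : (G ∪ {p}) ∩ (G' ∪ {q}) = G ∩ G' := by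
  ext z
  simp only [mem_inter, mem_union, mem_singleton]
  constructor
  · rintro ⟨h | rfl, h' | rfl⟩ <;> simp_all
  · rintro ⟨h, h'⟩; exact ⟨Or.inl h, Or.inl h'⟩

end Finset

namespace SC

open Module LinearMap

variable {K : Type} [Field K]

def sgn (x : ℕ) (F : Finset ℕ) : K := (-1) ^ #{y ∈ F | y < x}

lemma sgn_mul_self (x : ℕ) (F : Finset ℕ) : sgn x F * sgn x F = (1 : K) := by
  rw [sgn, ← mul_pow]; norm_num

lemma sgn_erase_of_lt {x y : ℕ} {F : Finset ℕ} (hy : y ∈ F) (h : y < x) :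
    sgn x (F.erase y) = -(sgn x F : K) := by
  have hmem : y ∈ F.filter (· < x) := mem_filter.mpr ⟨hy, h⟩
  rw [sgn, sgn, filter_erase, card_erase_of_mem hmem,
    ← Nat.sub_add_cancel (card_pos.mpr ⟨y, hmem⟩), pow_succ, Nat.add_sub_cancel]
  ring

lemma sgn_erase_of_le {x y : ℕ} (F : Finset ℕ) (h : x ≤ y) :
    sgn x (F.erase y) = (sgn x F : K) := by
  rw [sgn, sgn, filter_erase, erase_eq_of_notMem (fun hy => by simp at hy; omega)]

lemma sgn_mul_sgn_erase_swap {x y : ℕ} {F : Finset ℕ} (hx : x ∈ F) (hy : y ∈ F)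
    (hxy : x ≠ y) :
    sgn y F * sgn x (F.erase y) = -((sgn x F : K) * sgn y (F.erase x)) := by
  rcases lt_or_gt_of_ne hxy with h | h
  · rw [sgn_erase_of_le F h.le, sgn_erase_of_lt hx h]; ring
  · rw [sgn_erase_of_lt hy h, sgn_erase_of_le F h.le]; ring

def IsCone (Δ : Set (Finset ℕ)) (v : ℕ) : Prop := ∀ F ∈ Δ, insert v F ∈ Δ

variable (K) in
open Classical in
noncomputable def faceSingle (Δ : Set (Finset ℕ)) (b : ℤ) (G : Finset ℕ) :
    K →ₗ[K] (facesC Δ b →₀ K) :=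
  if h : G ∈ Δ ∧ (G.card : ℤ) = b then Finsupp.lsingle (⟨G, h⟩ : facesC Δ b) else 0

lemma faceSingle_val {Δ : Set (Finset ℕ)} {b : ℤ} (F : facesC Δ b) (k : K) :
    faceSingle K Δ b F.1 k = Finsupp.single F k := by
  rw [faceSingle, dif_pos F.2]; rfl

lemma bdry_single_one {Δ : Set (Finset ℕ)} {a : ℤ} (b : ℤ) (F : facesC Δ a) :
    bdry K Δ a b (Finsupp.single F 1) =
      ∑ x ∈ F.1, faceSingle K Δ b (F.1.erase x) (sgn x F.1) := by
  classical
  have hunfold : bdry K Δ a b (Finsupp.single F 1) = ∑ x ∈ F.1,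
      if h : F.1.erase x ∈ Δ ∧ ((F.1.erase x).card : ℤ) = b then
        (sgn x F.1 : K) • Finsupp.single (⟨F.1.erase x, h⟩ : facesC Δ b) 1 else 0 := by
    rw [bdry, Finsupp.lsum_single, LinearMap.toSpanSingleton_apply, one_smul]; rfl
  rw [hunfold]
  refine sum_congr rfl fun x _ => ?_
  unfold faceSingle
  split_ifs
  · exact Finsupp.smul_single_one _ _
  · rfl

lemma bdry_faceSingle {Δ : Set (Finset ℕ)} {a : ℤ} (b : ℤ) {G : Finset ℕ}
    (h : G ∈ Δ ∧ (G.card : ℤ) = a) (k : K) :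
    bdry K Δ a b (faceSingle K Δ a G k) =
      ∑ x ∈ G, faceSingle K Δ b (G.erase x) (k * sgn x G) := by
  obtain ⟨F, rfl⟩ : ∃ F : facesC Δ a, F.1 = G := ⟨⟨G, h⟩, rfl⟩
  rw [← mul_one k, ← smul_eq_mul, map_smul, faceSingle_val, map_smul, bdry_single_one, smul_sum]
  simp_rw [← map_smul, smul_eq_mul, mul_one]

lemma card_erase_eq_sub_one {G : Finset ℕ} {a : ℤ} (hG : (G.card : ℤ) = a) {x : ℕ}
    (hx : x ∈ G) : ((G.erase x).card : ℤ) = a - 1 := by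
  rw [card_erase_of_mem hx, Nat.cast_sub (card_pos.mpr ⟨x, hx⟩), hG, Nat.cast_one]

lemma chain_hom_ext {Δ : Set (Finset ℕ)} {a : ℤ} {M : Type} [AddCommGroup M] [Module K M]
    {f g : (facesC Δ a →₀ K) →ₗ[K] M}
    (h : ∀ F : facesC Δ a, f (Finsupp.single F 1) = g (Finsupp.single F 1)) : f = g :=
  Finsupp.lhom_ext' fun F => LinearMap.ext_ring (h F)

lemma bdry_comp_bdry {Δ : Set (Finset ℕ)} (hΔ : IsLowerSet Δ) {a b c : ℤ} (hab : b = a - 1) :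
    bdry K Δ b c ∘ₗ bdry K Δ a b = 0 := by
  refine chain_hom_ext fun F => ?_
  rw [LinearMap.comp_apply, bdry_single_one, map_sum, LinearMap.zero_apply]
  have hface : ∀ x ∈ F.1, F.1.erase x ∈ Δ ∧ ((F.1.erase x).card : ℤ) = b := fun x hx =>
    ⟨hΔ (erase_subset x F.1) F.2.1, hab ▸ card_erase_eq_sub_one F.2.2 hx⟩
  rw [sum_congr rfl fun x hx => bdry_faceSingle c (hface x hx) _, sum_sigma']
  -- the terms for `(x, y)` and `(y, x)` cancel
  refine sum_involution (fun p _ => ⟨p.2, p.1⟩) ?_ ?_ ?_ ?_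
  · rintro ⟨x, y⟩ hp
    simp only [mem_sigma, mem_erase] at hp
    obtain ⟨hx, hyx, hy⟩ := hp
    rw [erase_right_comm, ← map_add, sgn_mul_sgn_erase_swap hx hy hyx.symm, add_neg_cancel,
      map_zero]
  · rintro ⟨x, y⟩ hp _ h
    simp only [mem_sigma, mem_erase] at hp
    exact hp.2.1 (congrArg Sigma.fst h)
  · rintro ⟨x, y⟩ hp
    simp only [mem_sigma, mem_erase] at hp ⊢
    exact ⟨hp.2.2, Ne.symm hp.2.1, hp.1⟩
  · rintro ⟨x, y⟩ _; rfl

lemma sgn_insert_mul_add {v x : ℕ} {F : Finset ℕ} (hv : v ∉ F) (hx : x ∈ F) :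
    sgn v (insert v F) * sgn x (insert v F) + sgn x F * sgn v ((insert v F).erase x) = (0 : K) := by
  have hswap := sgn_mul_sgn_erase_swap (K := K) (mem_insert_of_mem hx) (mem_insert_self v F)
    (ne_of_mem_of_not_mem hx hv)
  rw [erase_insert hv] at hswap
  linear_combination (sgn x (insert v F) * sgn x F) * hswap
    - sgn x F * sgn v ((insert v F).erase x) * sgn_mul_self (K := K) x (insert v F)
    - sgn v (insert v F) * sgn x (insert v F) * sgn_mul_self (K := K) x F

variable (K) in
noncomputable def coneOp (Δ : Set (Finset ℕ)) (v : ℕ) (a b : ℤ) :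
    (facesC Δ a →₀ K) →ₗ[K] (facesC Δ b →₀ K) :=
  Finsupp.linearCombination K fun F =>
    if v ∈ F.1 then 0 else faceSingle K Δ b (insert v F.1) (sgn v (insert v F.1))

lemma coneOp_faceSingle {Δ : Set (Finset ℕ)} (v : ℕ) {a : ℤ} (b : ℤ) {G : Finset ℕ}
    (h : G ∈ Δ ∧ (G.card : ℤ) = a) (k : K) :
    coneOp K Δ v a b (faceSingle K Δ a G k) =
      if v ∈ G then 0 else faceSingle K Δ b (insert v G) (k * sgn v (insert v G)) := by
  obtain ⟨F, rfl⟩ : ∃ F : facesC Δ a, F.1 = G := ⟨⟨G, h⟩, rfl⟩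
  rw [faceSingle_val, coneOp, Finsupp.linearCombination_single]
  split_ifs
  · exact smul_zero k
  · rw [← map_smul, smul_eq_mul]

lemma bdry_coneOp_add_coneOp_bdry {Δ : Set (Finset ℕ)} (hΔ : IsLowerSet Δ) {v : ℕ}
    (hv : IsCone Δ v) (a : ℤ) :
    bdry K Δ (a + 1) a ∘ₗ coneOp K Δ v a (a + 1) +
      coneOp K Δ v (a - 1) a ∘ₗ bdry K Δ a (a - 1) = LinearMap.id := by
  refine chain_hom_ext fun F => ?_
  have hface : ∀ x ∈ F.1, F.1.erase x ∈ Δ ∧ ((F.1.erase x).card : ℤ) = a - 1 :=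
    fun x hx => ⟨hΔ (erase_subset x F.1) F.2.1, card_erase_eq_sub_one F.2.2 hx⟩
  rw [LinearMap.add_apply, LinearMap.comp_apply, LinearMap.comp_apply, LinearMap.id_apply,
    bdry_single_one, map_sum, ← faceSingle_val, coneOp_faceSingle v _ F.2]
  simp only [one_mul]
  rw [sum_congr rfl fun x hx => coneOp_faceSingle v a (hface x hx) _]
  set G := F.1
  by_cases hvG : v ∈ G
  · -- only the face `G.erase v` contributes
    rw [if_pos hvG, map_zero, zero_add, sum_eq_single_of_mem v hvG fun x _ hxv => by
      rw [if_pos (mem_erase.mpr ⟨Ne.symm hxv, hvG⟩)],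
      if_neg (notMem_erase v G), insert_erase hvG, sgn_mul_self]
  · have hvface : insert v G ∈ Δ ∧ ((insert v G).card : ℤ) = a + 1 :=
      ⟨hv G F.2.1, by rw [card_insert_of_notMem hvG, Nat.cast_succ, F.2.2]⟩
    rw [if_neg hvG, bdry_faceSingle a hvface, sum_insert hvG, erase_insert hvG, sgn_mul_self,
      add_assoc, ← sum_add_distrib, add_eq_left]
    refine sum_eq_zero fun x hx => ?_
    rw [if_neg fun h => hvG (mem_of_mem_erase h),
      ← erase_insert_of_ne (ne_of_mem_of_not_mem hx hvG).symm, ← map_add,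
      sgn_insert_mul_add hvG hx, map_zero]

lemma ker_bdry_eq_range_of_isCone {Δ : Set (Finset ℕ)} (hΔ : IsLowerSet Δ) {v : ℕ}
    (hv : IsCone Δ v) {a b c : ℤ} (hab : b = a - 1) (hbc : c = b - 1) :
    LinearMap.ker (bdry K Δ b c) = LinearMap.range (bdry K Δ a b) := by
  obtain rfl : a = b + 1 := by omega
  subst hbc
  apply le_antisymm
  · intro z hz
    refine ⟨coneOp K Δ v b (b + 1) z, ?_⟩
    have := LinearMap.congr_fun (bdry_coneOp_add_coneOp_bdry (K := K) hΔ hv b) z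
    rwa [LinearMap.add_apply, LinearMap.comp_apply, LinearMap.comp_apply,
      LinearMap.mem_ker.mp hz, map_zero, add_zero] at this
  · rintro z ⟨w, rfl⟩
    rw [LinearMap.mem_ker, ← LinearMap.comp_apply, bdry_comp_bdry hΔ (by ring),
      LinearMap.zero_apply]

def faceIncl {Δ₁ Δ₂ : Set (Finset ℕ)} (h : Δ₁ ⊆ Δ₂) (c : ℤ) (F : facesC Δ₁ c) :
    facesC Δ₂ c :=
  ⟨F.1, h F.2.1, F.2.2⟩

lemma faceIncl_injective {Δ₁ Δ₂ : Set (Finset ℕ)} (h : Δ₁ ⊆ Δ₂) (c : ℤ) :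
    Function.Injective (faceIncl h c) :=
  fun _ _ hFG => Subtype.ext (congrArg Subtype.val hFG :)

variable (K) in
noncomputable def inclChain {Δ₁ Δ₂ : Set (Finset ℕ)} (h : Δ₁ ⊆ Δ₂) (c : ℤ) :
    (facesC Δ₁ c →₀ K) →ₗ[K] (facesC Δ₂ c →₀ K) :=
  Finsupp.lmapDomain K K (faceIncl h c)

lemma inclChain_single {Δ₁ Δ₂ : Set (Finset ℕ)} (h : Δ₁ ⊆ Δ₂) {c : ℤ} (F : facesC Δ₁ c)
    (k : K) :
    inclChain K h c (Finsupp.single F k) = Finsupp.single (faceIncl h c F) k :=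
  Finsupp.mapDomain_single

lemma inclChain_injective {Δ₁ Δ₂ : Set (Finset ℕ)} (h : Δ₁ ⊆ Δ₂) (c : ℤ) :
    Function.Injective (inclChain K h c) :=
  Finsupp.mapDomain_injective (faceIncl_injective h c)

lemma inclChain_comp {Δ₁ Δ₂ Δ₃ : Set (Finset ℕ)} (h₁₂ : Δ₁ ⊆ Δ₂) (h₂₃ : Δ₂ ⊆ Δ₃)
    (c : ℤ) :
    inclChain K h₂₃ c ∘ₗ inclChain K h₁₂ c = inclChain K (h₁₂.trans h₂₃) c :=
  chain_hom_ext fun F => by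
    rw [comp_apply, inclChain_single, inclChain_single, inclChain_single]; rfl

lemma faceSingle_of_not_face {Δ : Set (Finset ℕ)} {b : ℤ} {G : Finset ℕ}
    (h : ¬(G ∈ Δ ∧ (G.card : ℤ) = b)) : faceSingle K Δ b G = 0 := by
  rw [faceSingle, dif_neg h]

lemma inclChain_faceSingle {Δ₁ Δ₂ : Set (Finset ℕ)} (h : Δ₁ ⊆ Δ₂) (b : ℤ) {G : Finset ℕ}
    (hG : G ∈ Δ₁) (k : K) :
    inclChain K h b (faceSingle K Δ₁ b G k) = faceSingle K Δ₂ b G k := by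
  by_cases hcard : (G.card : ℤ) = b
  · obtain ⟨F, rfl⟩ : ∃ F : facesC Δ₁ b, F.1 = G := ⟨⟨G, hG, hcard⟩, rfl⟩
    rw [faceSingle_val, inclChain_single, ← faceSingle_val]; rfl
  · rw [faceSingle_of_not_face (fun h' => hcard h'.2),
      faceSingle_of_not_face (fun h' => hcard h'.2),
      LinearMap.zero_apply, map_zero, LinearMap.zero_apply]

lemma bdry_comp_inclChain {Δ₁ Δ₂ : Set (Finset ℕ)} (h : Δ₁ ⊆ Δ₂) (hΔ₁ : IsLowerSet Δ₁)
    (a b : ℤ) : bdry K Δ₂ a b ∘ₗ inclChain K h a = inclChain K h b ∘ₗ bdry K Δ₁ a b :=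
  chain_hom_ext fun F => by
    rw [comp_apply, comp_apply, inclChain_single, bdry_single_one, bdry_single_one, map_sum]
    exact sum_congr rfl fun x _ =>
      (inclChain_faceSingle h b (hΔ₁ (erase_subset x F.1) F.2.1) _).symm

lemma finite_facesC {Δ : Set (Finset ℕ)} (hΔ : Δ.Finite) (c : ℤ) : Finite (facesC Δ c) :=
  have := hΔ.to_subtype
  Finite.of_injective (fun F : facesC Δ c => (⟨F.1, F.2.1⟩ : Δ))
    fun _ _ hFG => Subtype.ext (congrArg Subtype.val hFG :)

lemma finiteDimensional_chains {Δ : Set (Finset ℕ)} (hΔ : Δ.Finite) (c : ℤ) :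
    FiniteDimensional K (facesC Δ c →₀ K) :=
  have := finite_facesC hΔ c
  inferInstance

lemma finrank_chains {Δ : Set (Finset ℕ)} (hΔ : Δ.Finite) (c : ℤ) :
    finrank K (facesC Δ c →₀ K) = {F | F ∈ Δ ∧ (F.card : ℤ) = c}.ncard := by
  have := finite_facesC hΔ c
  have := Fintype.ofFinite (facesC Δ c)
  rw [finrank_finsupp_self, ← Nat.card_eq_fintype_card]
  rfl

/-- `hdim` is a truncated difference; since boundaries are cycles nothing is truncated. -/
lemma hdim_add_finrank_range {Δ : Set (Finset ℕ)} (hΔ : IsLowerSet Δ) (hfin : Δ.Finite)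
    {i a b : ℤ} (ha : a = i + 1) (hb : b = i + 2) :
    hdim K Δ i + finrank K (range (bdry K Δ b a)) = finrank K (ker (bdry K Δ a i)) := by
  subst ha hb
  have := finiteDimensional_chains (K := K) hfin (i + 1)
  have hle : range (bdry K Δ (i + 2) (i + 1)) ≤ ker (bdry K Δ (i + 1) i) := by
    rintro _ ⟨x, rfl⟩
    rw [mem_ker, ← comp_apply, bdry_comp_bdry hΔ (by ring), LinearMap.zero_apply]
  have := Submodule.finrank_mono hle
  rw [hdim]
  omega

section MayerVietoris

variable {X Y : Set (Finset ℕ)}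

variable (K X Y) in
noncomputable def mvInl (c : ℤ) :
    (facesC (X ∩ Y) c →₀ K) →ₗ[K] (facesC X c →₀ K) × (facesC Y c →₀ K) :=
  (inclChain K Set.inter_subset_left c).prod (-inclChain K Set.inter_subset_right c)

variable (K X Y) in
noncomputable def mvOut (c : ℤ) :
    (facesC X c →₀ K) × (facesC Y c →₀ K) →ₗ[K] (facesC (X ∪ Y) c →₀ K) :=
  (inclChain K Set.subset_union_left c).coprod (inclChain K Set.subset_union_right c)

lemma mvInl_injective (c : ℤ) : Function.Injective (mvInl K X Y c) :=
  fun _ _ h => inclChain_injective _ c (congrArg Prod.fst h)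

lemma mvOut_surjective (c : ℤ) : Function.Surjective (mvOut K X Y c) := by
  intro w
  induction w using Finsupp.induction_linear with
  | zero => exact ⟨0, map_zero _⟩
  | add u v hu hv =>
    obtain ⟨p, rfl⟩ := hu
    obtain ⟨q, rfl⟩ := hv
    exact ⟨p + q, map_add _ p q⟩
  | single F k =>
    rcases F.2.1 with hX | hY
    · obtain ⟨G, rfl⟩ : ∃ G : facesC X c, faceIncl Set.subset_union_left c G = F :=
        ⟨⟨F.1, hX, F.2.2⟩, rfl⟩
      exact ⟨(Finsupp.single G k, 0), by
        rw [mvOut, coprod_apply, map_zero, add_zero, inclChain_single]⟩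
    · obtain ⟨G, rfl⟩ : ∃ G : facesC Y c, faceIncl Set.subset_union_right c G = F :=
        ⟨⟨F.1, hY, F.2.2⟩, rfl⟩
      exact ⟨(0, Finsupp.single G k), by
        rw [mvOut, coprod_apply, map_zero, zero_add, inclChain_single]⟩

lemma mvOut_comp_mvInl (c : ℤ) : mvOut K X Y c ∘ₗ mvInl K X Y c = 0 := by
  rw [mvOut, mvInl, coprod_comp_prod, comp_neg, inclChain_comp, inclChain_comp]
  -- the two composite inclusions differ only in their subset proofs
  exact add_neg_cancel (inclChain K (Set.inter_subset_left.trans Set.subset_union_left :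
    X ∩ Y ⊆ X ∪ Y) c)

/-- By counting faces: `|X| + |Y| = |X ∪ Y| + |X ∩ Y|`. -/
lemma ker_mvOut_eq_range_mvInl (hX : X.Finite) (hY : Y.Finite) (c : ℤ) :
    ker (mvOut K X Y c) = range (mvInl K X Y c) := by
  have := finiteDimensional_chains (K := K) hX c
  have := finiteDimensional_chains (K := K) hY c
  have hfaces : ∀ Δ : Set (Finset ℕ),
      {F | F ∈ Δ ∧ (F.card : ℤ) = c} = Δ ∩ {F | (F.card : ℤ) = c} := fun _ => rfl
  have hcount := Set.ncard_union_add_ncard_inter {F | F ∈ X ∧ (F.card : ℤ) = c}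
    {F | F ∈ Y ∧ (F.card : ℤ) = c} (hX.subset fun _ h => h.1) (hY.subset fun _ h => h.1)
  simp only [hfaces, ← Set.union_inter_distrib_right, ← Set.inter_inter_distrib_right] at hcount
  have hrank := (mvOut K X Y c).finrank_range_add_finrank_ker
  rw [range_eq_top.mpr (mvOut_surjective c), finrank_top, finrank_prod, finrank_chains hX,
    finrank_chains hY, finrank_chains (hX.union hY)] at hrank
  have hinl := finrank_range_of_inj (mvInl_injective (K := K) (X := X) (Y := Y) c)
  rw [finrank_chains (hX.inter_of_left Y)] at hinl
  refine (Submodule.eq_of_le_of_finrank_eq ?_ ?_).symm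
  · rintro _ ⟨x, rfl⟩
    rw [mem_ker, ← comp_apply, mvOut_comp_mvInl, LinearMap.zero_apply]
  · simp only [hfaces] at hrank hinl
    omega

lemma bdry_mvInl (hX : IsLowerSet X) (hY : IsLowerSet Y) (a b : ℤ)
    (x : facesC (X ∩ Y) a →₀ K) :
    (bdry K X a b).prodMap (bdry K Y a b) (mvInl K X Y a x) = mvInl K X Y b (bdry K _ a b x) := by
  have hXY := hX.inter hY
  refine Prod.ext ?_ ?_
  · exact congr_fun (congrArg DFunLike.coe (bdry_comp_inclChain _ hXY a b)) x
  · change bdry K Y a b (-inclChain K _ a x) = -inclChain K _ b (bdry K _ a b x)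
    rw [map_neg]
    exact congrArg Neg.neg (congr_fun (congrArg DFunLike.coe (bdry_comp_inclChain _ hXY a b)) x)

lemma bdry_mvOut (hX : IsLowerSet X) (hY : IsLowerSet Y) (a b : ℤ)
    (p : (facesC X a →₀ K) × (facesC Y a →₀ K)) :
    bdry K (X ∪ Y) a b (mvOut K X Y a p) =
      mvOut K X Y b ((bdry K X a b).prodMap (bdry K Y a b) p) := by
  simp only [mvOut, coprod_apply, prodMap_apply, map_add]
  rw [← comp_apply, bdry_comp_inclChain _ hX, ← comp_apply (bdry K _ a b),
    bdry_comp_inclChain _ hY]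
  rfl

lemma hdim_union_of_isCone (hX : IsLowerSet X) (hY : IsLowerSet Y)
    (hXf : X.Finite) (hYf : Y.Finite) {v w : ℕ} (hv : IsCone X v) (hw : IsCone Y w) (i : ℤ) :
    hdim K (X ∪ Y) i = hdim K (X ∩ Y) (i - 1) := by
  have := finiteDimensional_chains (K := K) hXf (i + 1)
  have := finiteDimensional_chains (K := K) hYf (i + 1)
  have := finiteDimensional_chains (K := K) (hXf.inter_of_left Y) (i + 1)
  have hB : ∀ a b c : ℤ, b = a - 1 → c = b - 1 →
      ker ((bdry K X b c).prodMap (bdry K Y b c)) = range ((bdry K X a b).prodMap (bdry K Y a b)) :=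
    fun a b c hab hbc => by
      rw [ker_prodMap, range_prodMap, ker_bdry_eq_range_of_isCone hX hv hab hbc,
        ker_bdry_eq_range_of_isCone hY hw hab hbc]
  have hconn := finrank_ker_add_finrank_range_of_shortExact
    (dA2 := bdry K (X ∩ Y) (i + 1) i) (dA1 := bdry K (X ∩ Y) i (i - 1))
    (mvInl_injective (i + 1)) (mvInl_injective i) (mvInl_injective (i - 1))
    (mvOut_surjective (i + 2)) (mvOut_surjective (i + 1))
    (ker_mvOut_eq_range_mvInl hXf hYf (i + 1)) (ker_mvOut_eq_range_mvInl hXf hYf i)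
    (bdry_mvInl hX hY _ _) (bdry_mvInl hX hY _ _) (bdry_mvOut hX hY _ _) (bdry_mvOut hX hY _ _)
    (hB _ _ _ (by ring) (by ring)) (hB _ _ _ (by ring) (by ring))
  have hXY := hdim_add_finrank_range (K := K) (hX.union hY) (hXf.union hYf) (i := i) rfl rfl
  have hXY' := hdim_add_finrank_range (K := K) (hX.inter hY) (hXf.inter_of_left Y)
    (i := i - 1) (a := i) (b := i + 1) (by ring) (by ring)
  omega

end MayerVietoris

section Relabel

variable {φ : ℕ → ℕ}

lemma sgn_image (hφ : StrictMono φ) (x : ℕ) (F : Finset ℕ) :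
    sgn (φ x) (F.image φ) = (sgn x F : K) := by
  rw [sgn, sgn, filter_image, card_image_of_injective _ hφ.injective]
  simp only [hφ.lt_iff_lt]

lemma image_face_iff (hφ : Function.Injective φ) {Δ : Set (Finset ℕ)} {c : ℤ}
    {G : Finset ℕ} :
    G.image φ ∈ Finset.image φ '' Δ ∧ ((G.image φ).card : ℤ) = c ↔
      G ∈ Δ ∧ (G.card : ℤ) = c := by
  rw [(image_injective hφ).mem_set_image, card_image_of_injective _ hφ]

noncomputable def faceEquiv (hφ : Function.Injective φ) (Δ : Set (Finset ℕ)) (c : ℤ) :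
    facesC Δ c ≃ facesC (Finset.image φ '' Δ) c :=
  Equiv.ofBijective (fun F => ⟨F.1.image φ, (image_face_iff hφ).mpr F.2⟩) <| by
    refine ⟨fun F G hFG => Subtype.ext (image_injective hφ (congrArg Subtype.val hFG :)), ?_⟩
    rintro ⟨_, ⟨G, hG, rfl⟩, hc⟩
    exact ⟨⟨G, (image_face_iff hφ).mp ⟨⟨G, hG, rfl⟩, hc⟩⟩, rfl⟩

lemma faceEquiv_val (hφ : Function.Injective φ) {Δ : Set (Finset ℕ)} {c : ℤ}
    (F : facesC Δ c) :
    (faceEquiv hφ Δ c F).1 = F.1.image φ :=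
  rfl

variable (K) in
noncomputable def chainEquiv (hφ : Function.Injective φ) (Δ : Set (Finset ℕ)) (c : ℤ) :
    (facesC Δ c →₀ K) ≃ₗ[K] (facesC (Finset.image φ '' Δ) c →₀ K) :=
  Finsupp.domLCongr (faceEquiv hφ Δ c)

lemma chainEquiv_faceSingle (hφ : Function.Injective φ) {Δ : Set (Finset ℕ)} (b : ℤ)
    (G : Finset ℕ) (k : K) :
    chainEquiv K hφ Δ b (faceSingle K Δ b G k) = faceSingle K _ b (G.image φ) k := by
  by_cases hG : G ∈ Δ ∧ (G.card : ℤ) = b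
  · obtain ⟨F, rfl⟩ : ∃ F : facesC Δ b, F.1 = G := ⟨⟨G, hG⟩, rfl⟩
    rw [faceSingle_val, chainEquiv, Finsupp.domLCongr_single]
    exact (faceSingle_val (faceEquiv hφ Δ b F) k).symm
  · rw [faceSingle_of_not_face hG, faceSingle_of_not_face (mt (image_face_iff hφ).mp hG),
      LinearMap.zero_apply, LinearMap.zero_apply, map_zero]

lemma bdry_chainEquiv (hφ : StrictMono φ) {Δ : Set (Finset ℕ)} (a b : ℤ)
    (x : facesC Δ a →₀ K) :
    bdry K _ a b (chainEquiv K hφ.injective Δ a x) =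
      chainEquiv K hφ.injective Δ b (bdry K Δ a b x) := by
  classical
  induction x using Finsupp.induction_linear with
  | zero => simp only [map_zero]
  | add x y hx hy => simp only [map_add, hx, hy]
  | single F k =>
    rw [← mul_one k, ← smul_eq_mul, ← Finsupp.smul_single, map_smul, map_smul, map_smul,
      map_smul]
    congr 1
    rw [chainEquiv, Finsupp.domLCongr_single, bdry_single_one, bdry_single_one, map_sum]
    simp only [faceEquiv_val]
    rw [sum_image hφ.injective.injOn]
    refine sum_congr rfl fun y _ => ?_
    rw [← image_erase hφ.injective, sgn_image hφ]
    exact (chainEquiv_faceSingle hφ.injective b _ _).symm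

lemma hdim_image (hφ : StrictMono φ) (Δ : Set (Finset ℕ)) (i : ℤ) :
    hdim K (Finset.image φ '' Δ) i = hdim K Δ i := by
  rw [hdim, hdim, finrank_ker_eq_of_conj _ _ (bdry_chainEquiv hφ _ _),
    finrank_range_eq_of_conj _ _ (bdry_chainEquiv hφ _ _)]

end Relabel

lemma isLowerSet_gen (S : Set (Finset ℕ)) : IsLowerSet (gen S) :=
  fun _ _ hGF ⟨A, hA, hFA⟩ => ⟨A, hA, hGF.trans hFA⟩

lemma isCone_gen {S : Set (Finset ℕ)} {v : ℕ} (hv : ∀ A ∈ S, v ∈ A) : IsCone (gen S) v :=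
  fun _ ⟨A, hA, hFA⟩ => ⟨A, hA, insert_subset (hv A hA) hFA⟩

lemma gen_finite {S : Set (Finset ℕ)} (hS : S.Finite) : (gen S).Finite :=
  (hS.biUnion fun A _ => A.powerset.finite_toSet).subset fun _ ⟨_, hA, hFA⟩ =>
    Set.mem_biUnion hA (mem_coe.mpr (mem_powerset.mpr hFA))

lemma gen_union (S T : Set (Finset ℕ)) : gen (S ∪ T) = gen S ∪ gen T := by
  ext F
  simp only [gen, Set.mem_union, Set.mem_ofPred_eq, or_and_right, exists_or]

lemma gen_inter_gen (S T : Set (Finset ℕ)) :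
    gen S ∩ gen T = gen (Set.image2 (· ∩ ·) S T) := by
  ext F
  constructor
  · rintro ⟨⟨A, hA, hFA⟩, ⟨B, hB, hFB⟩⟩
    exact ⟨A ∩ B, Set.mem_image2_of_mem hA hB, subset_inter hFA hFB⟩
  · rintro ⟨_, ⟨A, hA, B, hB, rfl⟩, hF⟩
    exact ⟨⟨A, hA, hF.trans inter_subset_left⟩, ⟨B, hB, hF.trans inter_subset_right⟩⟩

lemma gen_image2_inter_self (S : Set (Finset ℕ)) : gen (Set.image2 (· ∩ ·) S S) = gen S := by
  rw [← gen_inter_gen, Set.inter_self]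

lemma image_gen (φ : ℕ → ℕ) (S : Set (Finset ℕ)) :
    Finset.image φ '' gen S = gen (Finset.image φ '' S) := by
  classical
  ext G
  constructor
  · rintro ⟨F, ⟨A, hA, hFA⟩, rfl⟩
    exact ⟨A.image φ, ⟨A, hA, rfl⟩, image_subset_image hFA⟩
  · rintro ⟨_, ⟨A, hA, rfl⟩, hGA⟩
    refine ⟨A.filter (φ · ∈ G), ⟨A, hA, filter_subset _ _⟩, ?_⟩
    ext z
    simp only [mem_image, mem_filter]
    constructor
    · rintro ⟨x, ⟨_, hx⟩, rfl⟩
      exact hx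
    · intro hz
      obtain ⟨x, hx, rfl⟩ := mem_image.mp (hGA hz)
      exact ⟨x, ⟨hx, hz⟩, rfl⟩

lemma hdim_gen_union_of_apex {S T : Set (Finset ℕ)} (hS : S.Finite) (hT : T.Finite) {v w : ℕ}
    (hv : ∀ A ∈ S, v ∈ A) (hw : ∀ B ∈ T, w ∈ B) (i : ℤ) :
    hdim K (gen (S ∪ T)) i = hdim K (gen (Set.image2 (· ∩ ·) S T)) (i - 1) := by
  rw [gen_union, hdim_union_of_isCone (isLowerSet_gen S) (isLowerSet_gen T) (gen_finite hS)
    (gen_finite hT) (isCone_gen hv) (isCone_gen hw), gen_inter_gen]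

lemma hdim_gen_insert_union_image {V R : Finset ℕ} {𝒢 : Set (Finset ℕ)} (h𝒢 : 𝒢.Finite)
    (hV : V.Nonempty) (hR : R.Nonempty) (hVR : Disjoint V R) (hG : ∀ G ∈ 𝒢, G ⊆ V)
    (i : ℤ) :
    hdim K (gen (insert V ((R ∪ ·) '' 𝒢))) i = hdim K (gen 𝒢) (i - 1) := by
  obtain ⟨w, hw⟩ := hV
  obtain ⟨r, hr⟩ := hR
  rw [Set.insert_eq,
    hdim_gen_union_of_apex (Set.finite_singleton V) (h𝒢.image _) (v := w) (w := r)
    (by simpa using hw) (by rintro _ ⟨G, -, rfl⟩; exact mem_union_left G hr),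
    Set.image2_singleton_left, Set.image_image,
    Set.image_congr fun G hG' => inter_union_eq_of_disjoint hVR (hG G hG'), Set.image_id']

lemma hdim_gen_union_singleton_pair {p q : ℕ} (hpq : p ≠ q) {𝒢 : Set (Finset ℕ)}
    (h𝒢 : 𝒢.Finite) (hp : ∀ G ∈ 𝒢, p ∉ G) (hq : ∀ G ∈ 𝒢, q ∉ G) (i : ℤ) :
    hdim K (gen ((· ∪ {p}) '' 𝒢 ∪ (· ∪ {q}) '' 𝒢)) i = hdim K (gen 𝒢) (i - 1) := by
  rw [hdim_gen_union_of_apex (h𝒢.image _) (h𝒢.image _) (v := p) (w := q)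
    (by rintro _ ⟨G, -, rfl⟩; exact mem_union_right G (mem_singleton_self p))
    (by rintro _ ⟨G, -, rfl⟩; exact mem_union_right G (mem_singleton_self q)),
    Set.image2_image_left, Set.image2_image_right,
    Set.image2_congr fun G hG G' hG' =>
      union_singleton_inter_union_singleton hpq (hp G' hG') (hq G hG),
    gen_image2_inter_self]

lemma hdim_gen_pair_union_image {V R : Finset ℕ} {p q : ℕ} {𝒢 : Set (Finset ℕ)}
    (h𝒢 : 𝒢.Finite) (hV : V.Nonempty) (hp : p ∈ R) (hq : q ∈ R) (hpq : p ≠ q)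
    (hVR : Disjoint V R) (hG : ∀ G ∈ 𝒢, G ⊆ V) (i : ℤ) :
    hdim K (gen ({V ∪ {p}, V ∪ {q}} ∪ (R ∪ ·) '' 𝒢)) i = hdim K (gen 𝒢) (i - 2) := by
  obtain ⟨w, hw⟩ := hV
  have hnot : ∀ {x}, x ∈ R → ∀ G ∈ 𝒢, x ∉ G := fun hx G hG' h =>
    disjoint_left.mp hVR (hG G hG' h) hx
  rw [hdim_gen_union_of_apex (Set.toFinite _) (h𝒢.image _) (v := w) (w := p)
    (by rintro _ (rfl | rfl) <;> exact mem_union_left _ hw)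
    (by rintro _ ⟨G, -, rfl⟩; exact mem_union_left G hp),
    Set.image2_insert_left, Set.image2_singleton_left, Set.image_image, Set.image_image,
    Set.image_congr fun G hG' => union_singleton_inter_union_eq hp hVR (hG G hG'),
    Set.image_congr fun G hG' => union_singleton_inter_union_eq hq hVR (hG G hG'),
    hdim_gen_union_singleton_pair hpq h𝒢 (fun G => hnot hp G) (fun G => hnot hq G)]
  ring_nf

end SC

/-- The number of positions occupied by the runs of lengths `L` laid out by `runsVerts`,
gaps included. -/
def runsSpan (t : ℕ) (L : List ℕ) : ℕ := (L.map (· + t)).sum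

lemma runsSpan_cons (t s : ℕ) (L : List ℕ) : runsSpan t (s :: L) = s + t + runsSpan t L := by
  simp [runsSpan]

lemma runsVerts_append (t : ℕ) (L M : List ℕ) (a : ℕ) :
    runsVerts t a (L ++ M) = runsVerts t a L ∪ runsVerts t (a + runsSpan t L) M := by
  induction L generalizing a with
  | nil => simp [runsVerts, runsSpan]
  | cons s L ih =>
    rw [List.cons_append, runsVerts, runsVerts, ih, runsSpan_cons, union_assoc]
    congr 3
    ring

lemma runsFacets_append (t : ℕ) (L M : List ℕ) (a : ℕ) :
    runsFacets t a (L ++ M) = runsFacets t a L ∪ runsFacets t (a + runsSpan t L) M := by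
  induction L generalizing a with
  | nil => simp [runsFacets, runsSpan]
  | cons s L ih =>
    rw [List.cons_append, runsFacets, runsFacets, ih, runsSpan_cons, Set.union_assoc]
    congr 3
    ring

lemma runsVerts_subset_Ico (t : ℕ) (L : List ℕ) (a : ℕ) :
    runsVerts t a L ⊆ Ico a (a + runsSpan t L) := by
  induction L generalizing a with
  | nil => simp [runsVerts]
  | cons s L ih =>
    rw [runsVerts, runsSpan_cons]
    refine union_subset (Ico_subset_Ico le_rfl (by omega)) ((ih _).trans (Ico_subset_Ico ?_ ?_))
      <;> omega

lemma subset_Ico_of_mem_runsFacets {t a : ℕ} {L : List ℕ} {F : Finset ℕ}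
    (hF : F ∈ runsFacets t a L) : F ⊆ Ico a (a + runsSpan t L) := by
  induction L generalizing a with
  | nil => simp [runsFacets] at hF
  | cons s L ih =>
    rw [runsSpan_cons]
    rcases hF with ⟨i, hi, rfl⟩ | hF
    · exact Ico_subset_Ico (by omega) (by omega)
    · exact (ih hF).trans (Ico_subset_Ico (by omega) (by omega))

lemma runsVerts_add (t c : ℕ) (L : List ℕ) (a : ℕ) :
    runsVerts t (a + c) L = (runsVerts t a L).image (· + c) := by
  induction L generalizing a with
  | nil => simp [runsVerts]
  | cons s L ih =>
    rw [runsVerts, runsVerts, image_union, image_add_right_Ico, ← ih]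
    rcases Nat.eq_zero_or_pos (s + t) with h | h
    · simp [show s = 0 by omega, show t = 0 by omega, add_right_comm a c]
    · congr 2 <;> omega

lemma runsFacets_add (t c : ℕ) (L : List ℕ) (a : ℕ) :
    runsFacets t (a + c) L = Finset.image (· + c) '' runsFacets t a L := by
  induction L generalizing a with
  | nil => simp [runsFacets]
  | cons s L ih =>
    rw [runsFacets, runsFacets, Set.image_union, show a + c + s + t = a + s + t + c by ring, ih]
    congr 1
    ext F
    constructor
    · rintro ⟨i, hi, rfl⟩
      exact ⟨_, ⟨i, hi, rfl⟩, by rw [image_add_right_Ico]; congr 1 <;> ring⟩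
    · rintro ⟨_, ⟨i, hi, rfl⟩, rfl⟩
      exact ⟨i, hi, by rw [image_add_right_Ico]; congr 1 <;> ring⟩

lemma runsVerts_nonempty {t : ℕ} (ht : 2 ≤ t) {L : List ℕ} (hL : L ≠ []) (a : ℕ) :
    (runsVerts t a L).Nonempty := by
  obtain ⟨s, L, rfl⟩ := List.exists_cons_of_ne_nil hL
  exact ⟨a, mem_union_left _ (mem_Ico.mpr ⟨le_rfl, by omega⟩)⟩

def complGen (V : Finset ℕ) (𝓕 : Set (Finset ℕ)) : Set (Finset ℕ) :=
  SC.gen ((V \ ·) '' 𝓕)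

lemma EC_eq_complGen (t : ℕ) (L : List ℕ) :
    EC t L = complGen (runsVerts t 0 L) (runsFacets t 0 L) := by
  simp only [EC, complGen, Set.image, eq_comm]

lemma finite_image_sdiff (V : Finset ℕ) (𝓕 : Set (Finset ℕ)) : ((V \ ·) '' 𝓕).Finite :=
  V.powerset.finite_toSet.subset <| by
    rintro _ ⟨F, -, rfl⟩
    exact mem_coe.mpr (mem_powerset.mpr sdiff_subset)

lemma image_complGen {φ : ℕ → ℕ} (hφ : Function.Injective φ) (V : Finset ℕ)
    (𝓕 : Set (Finset ℕ)) :
    Finset.image φ '' complGen V 𝓕 = complGen (V.image φ) (Finset.image φ '' 𝓕) := by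
  classical
  rw [complGen, complGen, SC.image_gen, Set.image_image, Set.image_image]
  simp only [image_sdiff _ _ hφ]

lemma complGen_union_union {V R : Finset ℕ} {𝓐 𝓑 : Set (Finset ℕ)}
    (h𝓐 : ∀ F ∈ 𝓐, Disjoint V F) (h𝓑 : ∀ F ∈ 𝓑, Disjoint R F) :
    complGen (V ∪ R) (𝓐 ∪ 𝓑) =
      SC.gen ((fun F => V ∪ (R \ F)) '' 𝓐 ∪ (R ∪ ·) '' ((V \ ·) '' 𝓑)) := by
  rw [complGen, Set.image_union, Set.image_image,
    Set.image_congr fun F hF => by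
      rw [union_sdiff_distrib, sdiff_eq_self_of_disjoint (h𝓐 F hF)],
    Set.image_congr (s := 𝓑) fun F hF => by
      rw [union_sdiff_distrib, sdiff_eq_self_of_disjoint (h𝓑 F hF), union_comm]]

section Gap

variable (t c : ℕ) (L1 L2 : List ℕ)

/-- The vertices of the runs `L1`, followed after an extra gap of `c` by those of `L2`. -/
def gapVerts : Finset ℕ := runsVerts t 0 L1 ∪ runsVerts t (runsSpan t L1 + c) L2

def gapFacets : Set (Finset ℕ) := runsFacets t 0 L1 ∪ runsFacets t (runsSpan t L1 + c) L2

lemma EC_append_eq_complGen_gap :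
    EC t (L1 ++ L2) = complGen (gapVerts t 0 L1 L2) (gapFacets t 0 L1 L2) := by
  rw [EC_eq_complGen, runsVerts_append, runsFacets_append, zero_add]
  rfl

def shiftFrom (a x : ℕ) : ℕ := if x < a then x else x + c

lemma shiftFrom_strictMono (a : ℕ) : StrictMono (shiftFrom c a) := by
  intro x y hxy
  simp only [shiftFrom]
  split_ifs <;> omega

variable {c}

lemma image_shiftFrom_of_lt {a : ℕ} {X : Finset ℕ} (hX : X ⊆ Ico 0 a) :
    X.image (shiftFrom c a) = X := by
  conv_rhs => rw [← image_id (s := X)]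
  exact image_congr fun _ hx => if_pos (mem_Ico.mp (hX hx)).2

lemma image_shiftFrom_of_le {a : ℕ} {X : Finset ℕ} (hX : ∀ x ∈ X, a ≤ x) :
    X.image (shiftFrom c a) = X.image (· + c) :=
  image_congr fun x hx => if_neg (not_lt.mpr (hX x hx))

variable (c)

lemma image_shiftFrom_gapVerts :
    (gapVerts t 0 L1 L2).image (shiftFrom c (runsSpan t L1)) = gapVerts t c L1 L2 := by
  classical
  rw [gapVerts, gapVerts, image_union, add_zero,
    image_shiftFrom_of_lt (by simpa using runsVerts_subset_Ico t L1 0),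
    image_shiftFrom_of_le fun _ hx => (mem_Ico.mp (runsVerts_subset_Ico t L2 _ hx)).1,
    runsVerts_add]

lemma image_shiftFrom_gapFacets :
    Finset.image (shiftFrom c (runsSpan t L1)) '' gapFacets t 0 L1 L2 = gapFacets t c L1 L2 := by
  rw [gapFacets, gapFacets, Set.image_union, add_zero, runsFacets_add,
    Set.image_congr fun F hF =>
      image_shiftFrom_of_lt (by simpa using subset_Ico_of_mem_runsFacets hF),
    Set.image_id', Set.image_congr fun F hF => image_shiftFrom_of_le fun _ hx =>
      (mem_Ico.mp (subset_Ico_of_mem_runsFacets hF hx)).1]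

lemma hdim_complGen_gap (K : Type) [Field K] (i : ℤ) :
    SC.hdim K (complGen (gapVerts t c L1 L2) (gapFacets t c L1 L2)) i =
      SC.hdim K (EC t (L1 ++ L2)) i := by
  rw [← image_shiftFrom_gapVerts, ← image_shiftFrom_gapFacets, ← image_complGen
    (shiftFrom_strictMono c _).injective, SC.hdim_image (shiftFrom_strictMono c _),
    EC_append_eq_complGen_gap]

end Gap

section RunRemoval

variable {t : ℕ} {L1 L2 : List ℕ}

lemma gapVerts_nonempty (ht : 2 ≤ t) (hr : L1 ++ L2 ≠ []) (c : ℕ) :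
    (gapVerts t c L1 L2).Nonempty := by
  cases L1 with
  | nil => exact (runsVerts_nonempty ht (by simpa using hr) _).mono subset_union_right
  | cons s L => exact (runsVerts_nonempty ht (List.cons_ne_nil s L) 0).mono subset_union_left

lemma disjoint_gapVerts_Ico (t c : ℕ) (L1 L2 : List ℕ) :
    Disjoint (gapVerts t c L1 L2) (Ico (runsSpan t L1) (runsSpan t L1 + c)) := by
  refine disjoint_left.mpr fun x hx hx' => ?_
  have := mem_Ico.mp hx'
  rcases mem_union.mp hx with h | h
  · have := mem_Ico.mp (runsVerts_subset_Ico t L1 0 h); omega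
  · have := mem_Ico.mp (runsVerts_subset_Ico t L2 _ h); omega

lemma disjoint_Ico_of_mem_gapFacets {c : ℕ} {F : Finset ℕ} (hF : F ∈ gapFacets t c L1 L2) :
    Disjoint (Ico (runsSpan t L1) (runsSpan t L1 + c)) F := by
  refine disjoint_left.mpr fun x hx' hx => ?_
  have := mem_Ico.mp hx'
  rcases hF with hF | hF
  · have := mem_Ico.mp (subset_Ico_of_mem_runsFacets hF hx); omega
  · have := mem_Ico.mp (subset_Ico_of_mem_runsFacets hF hx); omega

variable (t L1 L2)

lemma complGen_append_cons (s : ℕ) :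
    complGen (runsVerts t 0 (L1 ++ s :: L2)) (runsFacets t 0 (L1 ++ s :: L2)) =
      SC.gen ((fun F => gapVerts t (s + t) L1 L2 ∪
          (Ico (runsSpan t L1) (runsSpan t L1 + s + t - 1) \ F)) '' runFacets t (runsSpan t L1) s ∪
        (Ico (runsSpan t L1) (runsSpan t L1 + s + t - 1) ∪ ·) ''
          ((gapVerts t (s + t) L1 L2 \ ·) '' gapFacets t (s + t) L1 L2)) := by
  rw [runsVerts_append, runsFacets_append, zero_add, runsVerts, runsFacets, add_assoc _ s,
    union_left_comm, Set.union_left_comm, ← gapVerts, ← gapFacets, union_comm,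
    complGen_union_union]
  · rintro F ⟨i, hi, rfl⟩
    exact (disjoint_gapVerts_Ico t _ L1 L2).mono_right (Ico_subset_Ico (by omega) (by omega))
  · exact fun F hF =>
      (disjoint_Ico_of_mem_gapFacets hF).mono_left (Ico_subset_Ico le_rfl (by omega))

lemma runFacets_one (a : ℕ) : runFacets t a 1 = {Ico a (a + t)} := by
  ext F
  simp only [runFacets, Nat.lt_one_iff, exists_eq_left, add_zero, Set.mem_ofPred_eq,
    Set.mem_singleton_iff]

lemma runFacets_two (a : ℕ) :
    runFacets t a 2 = {Ico a (a + t), Ico (a + 1) (a + 1 + t)} := by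
  ext F
  simp only [runFacets, Set.mem_ofPred_eq, Set.mem_insert_iff, Set.mem_singleton_iff]
  constructor
  · rintro ⟨i, hi, rfl⟩
    interval_cases i <;> simp
  · rintro (rfl | rfl)
    exacts [⟨0, by omega, by simp⟩, ⟨1, by omega, rfl⟩]

variable {t L1 L2}

lemma hdim_EC_append_one (K : Type) [Field K] (ht : 2 ≤ t) (hr : L1 ++ L2 ≠ []) (i : ℤ) :
    SC.hdim K (EC t (L1 ++ 1 :: L2)) i = SC.hdim K (EC t (L1 ++ L2)) (i - 1) := by
  rw [EC_eq_complGen, complGen_append_cons]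
  set a := runsSpan t L1
  rw [show a + 1 + t - 1 = a + t by omega, runFacets_one,
    Set.image_singleton, Finset.sdiff_self, union_empty, ← Set.insert_eq,
    SC.hdim_gen_insert_union_image (finite_image_sdiff _ _) (gapVerts_nonempty ht hr _)
      (nonempty_Ico.mpr (by omega))
      ((disjoint_gapVerts_Ico t _ L1 L2).mono_right (Ico_subset_Ico le_rfl (by omega)))
      (by rintro _ ⟨F, -, rfl⟩; exact sdiff_subset),
    ← complGen, hdim_complGen_gap]

lemma hdim_EC_append_two (K : Type) [Field K] (ht : 2 ≤ t) (hr : L1 ++ L2 ≠ []) (i : ℤ) :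
    SC.hdim K (EC t (L1 ++ 2 :: L2)) i = SC.hdim K (EC t (L1 ++ L2)) (i - 2) := by
  rw [EC_eq_complGen, complGen_append_cons]
  set a := runsSpan t L1
  have hleft : Ico a (a + t + 1) \ Ico a (a + t) = {a + t} := by
    ext x; simp only [mem_sdiff, mem_Ico, mem_singleton]; omega
  have hright : Ico a (a + t + 1) \ Ico (a + 1) (a + 1 + t) = {a} := by
    ext x; simp only [mem_sdiff, mem_Ico, mem_singleton]; omega
  rw [show a + 2 + t - 1 = a + t + 1 by omega, runFacets_two,
    Set.image_pair, hleft, hright,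
    SC.hdim_gen_pair_union_image (finite_image_sdiff _ _) (gapVerts_nonempty ht hr _)
      (mem_Ico.mpr ⟨by omega, by omega⟩) (mem_Ico.mpr ⟨le_rfl, by omega⟩) (by omega)
      ((disjoint_gapVerts_Ico t _ L1 L2).mono_right (Ico_subset_Ico le_rfl (by omega)))
      (by rintro _ ⟨F, -, rfl⟩; exact sdiff_subset),
    ← complGen, hdim_complGen_gap]

end RunRemoval

theorem short_run_removal_general (K : Type) [Field K] (t : ℕ) (ht : 2 ≤ t) (L1 L2 : List ℕ)
    (hr : L1 ++ L2 ≠ []) :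
    (∀ i : ℤ, SC.hdim K (EC t (L1 ++ 2 :: L2)) i = SC.hdim K (EC t (L1 ++ L2)) (i - 2)) ∧
    (∀ i : ℤ, SC.hdim K (EC t (L1 ++ 1 :: L2)) i = SC.hdim K (EC t (L1 ++ L2)) (i - 1)) :=
  ⟨hdim_EC_append_two K ht hr, hdim_EC_append_one K ht hr⟩

/-- Proposition 4.3(iii),(iv). For `E = E(s_1,…,s_r)` with `r ≥ 2`: if
`s_j = 2` then `H̃_i(E) ≅ H̃_{i-2}(E(s_1,…,ŝ_j,…,s_r))`, and if `s_j = 1` then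
`H̃_i(E) ≅ H̃_{i-1}(E(s_1,…,ŝ_j,…,s_r))`, for all `i` (over a field, recorded as equality
of dimensions). -/
theorem short_run_removal (K : Type) [Field K] (t : ℕ) (ht : 2 ≤ t) (L1 L2 : List ℕ)
    (hpos : ∀ x ∈ L1 ++ L2, 1 ≤ x) (hr : L1 ++ L2 ≠ []) :
    (∀ i : ℤ, SC.hdim K (EC t (L1 ++ 2 :: L2)) i = SC.hdim K (EC t (L1 ++ L2)) (i - 2)) ∧
    (∀ i : ℤ, SC.hdim K (EC t (L1 ++ 1 :: L2)) i = SC.hdim K (EC t (L1 ++ L2)) (i - 1)) :=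
  short_run_removal_general K t ht L1 L2 hr
end
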